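/- arXiv:1906.09142 — 3 statements merged into one kernel-verified Lean document; each statement's English description precedes it below -/
import Mathlib

section
/- For all non-negative real numbers t and t', every natural number c, and every ε ∈ [0,1]: if t − t' ≤ c, then [t]_ε − [t']_ε ≤ c. -/
/-- The ε-digitization of a real number `t`: `⌊t⌋` if `t ≤ ⌊t⌋ + ε`, and `⌈t⌉` otherwise. -/
noncomputable def digitize (ε t : ℝ) : ℤ :=
  if t ≤ ⌊t⌋ + ε then ⌊t⌋ else ⌈t⌉

lemma digitize_mono (ε : ℝ) {t s : ℝ} (hts : t ≤ s) :
    digitize ε t ≤ digitize ε s := by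
  unfold digitize
  split_ifs with h1 h2 h2
  · exact Int.floor_mono hts
  · exact le_trans (Int.floor_mono hts) (Int.floor_le_ceil s)
  · -- t > ⌊t⌋ + ε, s ≤ ⌊s⌋ + ε; need ⌈t⌉ ≤ ⌊s⌋
    push_neg at h1
    have hf : ⌊t⌋ ≤ ⌊s⌋ := Int.floor_mono hts
    have hc : ⌈t⌉ ≤ ⌊t⌋ + 1 := Int.ceil_le_floor_add_one t
    rcases lt_or_eq_of_le hf with hlt | heq
    · omega
    · exfalso
      have : s ≤ (⌊t⌋ : ℝ) + ε := by rw [heq]; exact h2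
      linarith
  · exact Int.ceil_mono hts

lemma digitize_add_int (ε t : ℝ) (c : ℤ) :
    digitize ε (t + c) = digitize ε t + c := by
  unfold digitize
  rw [Int.floor_add_intCast, Int.ceil_add_intCast]
  push_cast
  split_ifs with h1 h2 h2
  · ring
  · exfalso; apply h2; linarith
  · exfalso; apply h1; linarith
  · ring

theorem digitize_sub_le (t t' : ℝ) (ht : 0 ≤ t) (ht' : 0 ≤ t') (c : ℕ)
    (ε : ℝ) (hε : ε ∈ Set.Icc (0 : ℝ) 1)
    (h : t - t' ≤ (c : ℝ)) :
    digitize ε t - digitize ε t' ≤ (c : ℤ) := by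
  have := digitize_mono ε (show t ≤ t' + ((c : ℤ) : ℝ) by push_cast; linarith)
  rw [digitize_add_int] at this
  omega
end

section
/- For all non-negative real numbers t and t', every natural number c, and every ε ∈ [0,1]: if t − t' ≥ c, then [t]_ε − [t']_ε ≥ c. -/
/- Digitization commutes with integer translations and is monotone, so
`[t']_ε + c = [t' + c]_ε ≤ [t]_ε`. -/

theorem digitize_add_intCast (ε t : ℝ) (n : ℤ) :
    digitize ε (t + n) = digitize ε t + n := by
  have hcond : t + n ≤ ((⌊t⌋ + n : ℤ) : ℝ) + ε ↔ t ≤ ⌊t⌋ + ε := by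
    push_cast
    constructor <;> intro <;> linarith
  simp only [digitize, Int.floor_add_intCast, Int.ceil_add_intCast, hcond]
  split_ifs <;> rfl

theorem digitize_mono_s1 (ε : ℝ) : Monotone (digitize ε) := by
  intro s t hst
  unfold digitize
  split_ifs with hs ht ht
  · exact Int.floor_le_floor hst
  · exact (Int.floor_le_floor hst).trans (Int.floor_le_ceil t)
  · -- `s` is rounded up and `t` down, so they cannot lie in the same unit interval.
    have hfloor : ⌊s⌋ < ⌊t⌋ := by
      have : (⌊s⌋ : ℝ) < ⌊t⌋ := by linarith
      exact_mod_cast this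
    have := Int.ceil_le_floor_add_one s
    omega
  · exact Int.ceil_le_ceil hst

theorem digitize_sub_ge_general (t t' : ℝ) (c : ℕ)
    (ε : ℝ)
    (h : t - t' ≥ (c : ℝ)) :
    digitize ε t - digitize ε t' ≥ (c : ℤ) := by
  have hmono : digitize ε (t' + (c : ℤ)) ≤ digitize ε t :=
    digitize_mono_s1 ε (by push_cast; linarith)
  rw [digitize_add_intCast] at hmono
  omega

theorem digitize_sub_ge (t t' : ℝ) (ht : 0 ≤ t) (ht' : 0 ≤ t') (c : ℕ)
    (ε : ℝ) (hε : ε ∈ Set.Icc (0 : ℝ) 1)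
    (h : t - t' ≥ (c : ℝ)) :
    digitize ε t - digitize ε t' ≥ (c : ℤ) :=
  digitize_sub_ge_general t t' c ε h
end

section
/- Digitized differences of accumulated durations satisfy the floor/ceiling difference constraints: for all non-negative real numbers D and D' with D' ≤ D, and every ε ∈ [0,1], one has ⌊D − D'⌋ ≤ [D]_ε − [D']_ε ≤ ⌈D − D'⌉. (In particular, the integer vector assigning to each accumulated duration its ε-digitization is a feasible solution of the difference-constraint system t_π − t_{π^(k)} ≥ ⌊dur(π,|π|) − dur(π,k)⌋ and −t_π + t_{π^(k)} ≥ −⌈dur(π,|π|) − dur(π,k)⌉.) -/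
theorem digitize_diff_floor_ceil_bounds (D D' : ℝ) (hD : 0 ≤ D) (hD' : 0 ≤ D')
    (hle : D' ≤ D) (ε : ℝ) (hε : ε ∈ Set.Icc (0 : ℝ) 1) :
    ⌊D - D'⌋ ≤ digitize ε D - digitize ε D' ∧
    digitize ε D - digitize ε D' ≤ ⌈D - D'⌉ := by
  obtain ⟨hε0, hε1⟩ := hε
  have fD := Int.floor_le D
  have fD' := Int.floor_le D'
  have fD1 := Int.lt_floor_add_one D
  have fD1' := Int.lt_floor_add_one D'
  have cD := Int.le_ceil D
  have cD' := Int.le_ceil D'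
  have cfD : (⌈D⌉:ℝ) ≤ (⌊D⌋:ℝ) + 1 := by exact_mod_cast Int.ceil_le_floor_add_one D
  have cfD' : (⌈D'⌉:ℝ) ≤ (⌊D'⌋:ℝ) + 1 := by exact_mod_cast Int.ceil_le_floor_add_one D'
  have fcD : (⌊D⌋:ℝ) ≤ (⌈D⌉:ℝ) := by exact_mod_cast Int.floor_le_ceil D
  have fcD' : (⌊D'⌋:ℝ) ≤ (⌈D'⌉:ℝ) := by exact_mod_cast Int.floor_le_ceil D'
  have fS := Int.floor_le (D - D')
  have fS1 := Int.lt_floor_add_one (D - D')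
  have cS := Int.le_ceil (D - D')
  have cS1 : (⌈D - D'⌉:ℝ) < (D - D') + 1 := Int.ceil_lt_add_one _
  unfold digitize
  split_ifs with h1 h2 h2 <;>
    constructor <;>
    · rw [← Int.lt_add_one_iff, ← @Int.cast_lt ℝ]
      push_cast
      linarith
end
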